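/- arXiv:2506.15295 — 4 statements merged into one kernel-verified Lean document; each statement's English description precedes it below -/
import Mathlib

section
/- For every transition Γ=(W,L,p) --tx--> Γ'=(W',L',p') of the lending-protocol state machine whose label tx is not a swap, and for every base token τ, the total supply of τ is preserved: Σ_a W'(τ,a) + L'(τ) = Σ_a W(τ,a) + L(τ). -/
open scoped BigOperators Classical

namespace LendingProtocol

/-- Protocol parameters: liquidation threshold, liquidation reward, and the
interest-rate function, which depends only on the token and on the triple
(reserves, credit supply, debt supply). -/
structure Params (Token : Type) where
  Tliq : ℝ
  Rliq : ℝ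
  intr : Token → ℝ → ℝ → ℝ → ℝ
  Tliq_pos : 0 < Tliq
  Tliq_lt_one : Tliq < 1
  one_lt_Rliq : 1 < Rliq
  intr_pos : ∀ τ r s d, 0 < intr τ r s d

/-- State of the lending pool: reserves, credits and debts (nonnegative,
with finite support). -/
structure LPState (User Token : Type) where
  res : Token → ℝ
  cr : Token → User → ℝ
  db : Token → User → ℝ
  res_nonneg : ∀ τ, 0 ≤ res τ
  cr_nonneg : ∀ τ a, 0 ≤ cr τ a
  db_nonneg : ∀ τ a, 0 ≤ db τ a
  res_fin : (Function.support res).Finite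
  cr_fin : (Function.support (Function.uncurry cr)).Finite
  db_fin : (Function.support (Function.uncurry db)).Finite

/-- A blockchain state: wallets, LP state, and (strictly positive) prices. -/
structure Conf (User Token : Type) where
  wal : Token → User → ℝ
  lp : LPState User Token
  price : Token → ℝ
  wal_nonneg : ∀ τ a, 0 ≤ wal τ a
  wal_fin : (Function.support (Function.uncurry wal)).Finite
  price_pos : ∀ τ, 0 < price τ

variable {User Token : Type}

/-- Credit supply S(τ). -/
noncomputable def creditSupply (L : LPState User Token) (τ : Token) : ℝ := ∑ᶠ a, L.cr τ a

/-- Debt supply D(τ). -/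
noncomputable def debtSupply (L : LPState User Token) (τ : Token) : ℝ := ∑ᶠ a, L.db τ a

/-- Exchange rate X_L(τ). -/
noncomputable def exch (L : LPState User Token) (τ : Token) : ℝ :=
  if creditSupply L τ = 0 then 1 else (L.res τ + debtSupply L τ) / creditSupply L τ

/-- Interest rate I_L(τ). -/
noncomputable def rate (P : Params Token) (L : LPState User Token) (τ : Token) : ℝ :=
  P.intr τ (L.res τ) (creditSupply L τ) (debtSupply L τ)

/-- Credit value of a user. -/
noncomputable def Cval (Γ : Conf User Token) (a : User) : ℝ :=
  ∑ᶠ τ, Γ.lp.cr τ a * exch Γ.lp τ * Γ.price τ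

/-- Debt value of a user. -/
noncomputable def Dval (Γ : Conf User Token) (a : User) : ℝ :=
  ∑ᶠ τ, Γ.lp.db τ a * Γ.price τ

/-- Health factor, valued in ℝ ∪ {+∞}. -/
noncomputable def Health (P : Params Token) (Γ : Conf User Token) (a : User) : EReal :=
  if 0 < Dval Γ a then ((P.Tliq * Cval Γ a / Dval Γ a : ℝ) : EReal) else ⊤

/-- Net worth of a user. -/
noncomputable def Wealth (Γ : Conf User Token) (a : User) : ℝ :=
  (∑ᶠ τ, Γ.wal τ a * Γ.price τ) + Cval Γ a - Dval Γ a

/-- Transaction labels. -/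
inductive Tx (User Token : Type) where
  | dep (a : User) (v : ℝ) (τ : Token)
  | bor (a : User) (v : ℝ) (τ : Token)
  | rep (a : User) (v : ℝ) (τ : Token)
  | rdm (a : User) (w : ℝ) (τ : Token)
  | liq (a : User) (b : User) (v : ℝ) (τ0 : Token) (τ1 : Token)
  | int
  | px (δ : ℝ) (τ : Token)
  | swp (a : User) (v : ℝ) (τ0 : Token) (τ1 : Token)

/-- Pointwise update of a one-argument function. -/
noncomputable def upd1 {α : Type} (f : α → ℝ) (x : α) (y : ℝ) : α → ℝ :=
  fun x' => if x' = x then y else f x'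

/-- Pointwise update of a two-argument function. -/
noncomputable def upd2 {α β : Type} (f : α → β → ℝ) (x : α) (z : β) (y : ℝ) : α → β → ℝ :=
  fun x' z' => if x' = x ∧ z' = z then y else f x' z'

/-- The labelled transition relation of the lending protocol. -/
inductive Step (P : Params Token) : Conf User Token → Tx User Token → Conf User Token → Prop
  | dep {Γ Γ' : Conf User Token} {a : User} {v : ℝ} {τ : Token}
      (hv : 0 < v) (hw : v ≤ Γ.wal τ a)
      (hwal : Γ'.wal = upd2 Γ.wal τ a (Γ.wal τ a - v))
      (hres : Γ'.lp.res = upd1 Γ.lp.res τ (Γ.lp.res τ + v))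
      (hcr : Γ'.lp.cr = upd2 Γ.lp.cr τ a (Γ.lp.cr τ a + v / exch Γ.lp τ))
      (hdb : Γ'.lp.db = Γ.lp.db)
      (hp : Γ'.price = Γ.price) :
      Step P Γ (Tx.dep a v τ) Γ'
  | bor {Γ Γ' : Conf User Token} {a : User} {v : ℝ} {τ : Token}
      (hv : 0 < v) (hres0 : v ≤ Γ.lp.res τ)
      (hwal : Γ'.wal = upd2 Γ.wal τ a (Γ.wal τ a + v))
      (hres : Γ'.lp.res = upd1 Γ.lp.res τ (Γ.lp.res τ - v))
      (hcr : Γ'.lp.cr = Γ.lp.cr)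
      (hdb : Γ'.lp.db = upd2 Γ.lp.db τ a (Γ.lp.db τ a + v))
      (hp : Γ'.price = Γ.price)
      (hH : (1 : EReal) ≤ Health P Γ' a) :
      Step P Γ (Tx.bor a v τ) Γ'
  | rep {Γ Γ' : Conf User Token} {a : User} {v : ℝ} {τ : Token}
      (hv : 0 < v) (hw : v ≤ Γ.wal τ a) (hd : v ≤ Γ.lp.db τ a)
      (hwal : Γ'.wal = upd2 Γ.wal τ a (Γ.wal τ a - v))
      (hres : Γ'.lp.res = upd1 Γ.lp.res τ (Γ.lp.res τ + v))
      (hcr : Γ'.lp.cr = Γ.lp.cr)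
      (hdb : Γ'.lp.db = upd2 Γ.lp.db τ a (Γ.lp.db τ a - v))
      (hp : Γ'.price = Γ.price) :
      Step P Γ (Tx.rep a v τ) Γ'
  | rdm {Γ Γ' : Conf User Token} {a : User} {w : ℝ} {τ : Token}
      (hw : 0 < w) (hcr0 : w ≤ Γ.lp.cr τ a) (hres0 : w * exch Γ.lp τ ≤ Γ.lp.res τ)
      (hwal : Γ'.wal = upd2 Γ.wal τ a (Γ.wal τ a + w * exch Γ.lp τ))
      (hres : Γ'.lp.res = upd1 Γ.lp.res τ (Γ.lp.res τ - w * exch Γ.lp τ))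
      (hcr : Γ'.lp.cr = upd2 Γ.lp.cr τ a (Γ.lp.cr τ a - w))
      (hdb : Γ'.lp.db = Γ.lp.db)
      (hp : Γ'.price = Γ.price)
      (hH : (1 : EReal) ≤ Health P Γ' a) :
      Step P Γ (Tx.rdm a w τ) Γ'
  | liq {Γ Γ' : Conf User Token} {a b : User} {v : ℝ} {τ0 τ1 : Token}
      (hab : a ≠ b) (hv : 0 < v) (hwa : v ≤ Γ.wal τ0 a) (hdbb : v ≤ Γ.lp.db τ0 b)
      (hHb : Health P Γ b < 1)
      (hcrb : (v / exch Γ.lp τ1) * (Γ.price τ0 / Γ.price τ1) * P.Rliq ≤ Γ.lp.cr τ1 b)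
      (hHb' : Health P Γ' b ≤ 1)
      (hwal : Γ'.wal = upd2 Γ.wal τ0 a (Γ.wal τ0 a - v))
      (hres : Γ'.lp.res = upd1 Γ.lp.res τ0 (Γ.lp.res τ0 + v))
      (hdb : Γ'.lp.db = upd2 Γ.lp.db τ0 b (Γ.lp.db τ0 b - v))
      (hcr : Γ'.lp.cr =
        upd2 (upd2 Γ.lp.cr τ1 b
            (Γ.lp.cr τ1 b - (v / exch Γ.lp τ1) * (Γ.price τ0 / Γ.price τ1) * P.Rliq)) τ1 a
          (Γ.lp.cr τ1 a + (v / exch Γ.lp τ1) * (Γ.price τ0 / Γ.price τ1) * P.Rliq))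
      (hp : Γ'.price = Γ.price) :
      Step P Γ (Tx.liq a b v τ0 τ1) Γ'
  | int {Γ Γ' : Conf User Token}
      (hwal : Γ'.wal = Γ.wal)
      (hres : Γ'.lp.res = Γ.lp.res)
      (hcr : Γ'.lp.cr = Γ.lp.cr)
      (hdb : Γ'.lp.db = fun τ a => Γ.lp.db τ a + Γ.lp.db τ a * rate P Γ.lp τ)
      (hp : Γ'.price = Γ.price) :
      Step P Γ Tx.int Γ'
  | px {Γ Γ' : Conf User Token} {δ : ℝ} {τ : Token}
      (hδ : δ ≠ 0) (hpos : 0 < Γ.price τ + δ)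
      (hwal : Γ'.wal = Γ.wal) (hlp : Γ'.lp = Γ.lp)
      (hp : Γ'.price = upd1 Γ.price τ (Γ.price τ + δ)) :
      Step P Γ (Tx.px δ τ) Γ'
  | swp {Γ Γ' : Conf User Token} {a : User} {v : ℝ} {τ0 τ1 : Token}
      (hne : τ0 ≠ τ1) (hv : 0 < v) (hw : v ≤ Γ.wal τ0 a)
      (hwal : Γ'.wal = upd2 (upd2 Γ.wal τ0 a (Γ.wal τ0 a - v)) τ1 a
        (Γ.wal τ1 a + v * Γ.price τ0 / Γ.price τ1))
      (hlp : Γ'.lp = Γ.lp) (hp : Γ'.price = Γ.price) :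
      Step P Γ (Tx.swp a v τ0 τ1) Γ'

/-- Execution of a sequence of transactions; transactions that are not
enabled when their turn comes are skipped. -/
inductive Steps (P : Params Token) :
    Conf User Token → List (Tx User Token) → Conf User Token → Prop
  | nil (Γ : Conf User Token) : Steps P Γ [] Γ
  | cons {Γ Γ' Γ'' : Conf User Token} {tx : Tx User Token} {txs : List (Tx User Token)} :
      Step P Γ tx Γ' → Steps P Γ' txs Γ'' → Steps P Γ (tx :: txs) Γ''
  | skip {Γ Γ'' : Conf User Token} {tx : Tx User Token} {txs : List (Tx User Token)} :
      (∀ Δ, ¬ Step P Γ tx Δ) → Steps P Γ txs Γ'' → Steps P Γ (tx :: txs) Γ''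

/-- Initial states: the LP holds no reserves, no credits, no debts. -/
def Initial (Γ : Conf User Token) : Prop :=
  (∀ τ, Γ.lp.res τ = 0) ∧ (∀ τ a, Γ.lp.cr τ a = 0) ∧ (∀ τ a, Γ.lp.db τ a = 0)

/-- Reflexive-transitive closure of the step relation. -/
inductive Run (P : Params Token) : Conf User Token → Conf User Token → Prop
  | refl (Γ : Conf User Token) : Run P Γ Γ
  | tail {Γ Γ' Γ'' : Conf User Token} {tx : Tx User Token} :
      Run P Γ Γ' → Step P Γ' tx Γ'' → Run P Γ Γ''

/-- Reachability from some initial state. -/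
def Reachable (P : Params Token) (Γ : Conf User Token) : Prop :=
  ∃ Γ0, Initial Γ0 ∧ Run P Γ0 Γ

end LendingProtocol

section Aux

open LendingProtocol

variable {User Token : Type}

lemma finsum_ite_update {g : User → ℝ} (hg : (Function.support g).Finite)
    (a0 : User) (y : ℝ) :
    (∑ᶠ a, (if a = a0 then y else g a)) = (∑ᶠ a, g a) + (y - g a0) := by
  have h1 : ∀ a, (if a = a0 then y else g a) = g a + (if a = a0 then y - g a0 else 0) := by
    intro a; by_cases h : a = a0 <;> simp [h]
  rw [finsum_congr h1, finsum_add_distrib hg]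
  · congr 1
    rw [finsum_eq_single _ a0 (by intro x hx; simp [hx])]
    simp
  · refine Set.Finite.subset (Set.finite_singleton a0) ?_
    intro x hx
    by_cases h : x = a0
    · simp [h]
    · simp [Function.mem_support, h] at hx

lemma wal_support_fin (Γ : Conf User Token) (τ : Token) :
    (Function.support (Γ.wal τ)).Finite := by
  have hinj : Function.Injective (fun a : User => (τ, a)) := by
    intro a b hab; exact (Prod.ext_iff.mp hab).2
  refine Set.Finite.subset (Γ.wal_fin.preimage hinj.injOn) ?_
  intro a ha
  simpa [Function.uncurry] using ha

/-- Sum over users of a wallet updated at one (token, user) pair. -/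
lemma finsum_upd2 (Γ : Conf User Token) (τ τ0 : Token) (a0 : User) (y : ℝ) :
    (∑ᶠ a, upd2 Γ.wal τ0 a0 y τ a) =
      (∑ᶠ a, Γ.wal τ a) + (if τ = τ0 then y - Γ.wal τ0 a0 else 0) := by
  by_cases hτ : τ = τ0
  · subst hτ
    simp only [if_true, upd2, true_and]
    simpa using finsum_ite_update (wal_support_fin Γ τ) a0 y
  · simp [upd2, hτ]

end Aux

/-- every non-swap transition preserves, for each base token τ,
the total supply Σ_a W(τ,a) + L(τ). -/
theorem token_supply_preservation {User Token : Type}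
    (P : LendingProtocol.Params Token)
    (Γ Γ' : LendingProtocol.Conf User Token) (tx : LendingProtocol.Tx User Token)
    (h : LendingProtocol.Step P Γ tx Γ')
    (hswp : ∀ a v τ0 τ1, tx ≠ LendingProtocol.Tx.swp a v τ0 τ1)
    (τ : Token) :
    (∑ᶠ a, Γ'.wal τ a) + Γ'.lp.res τ = (∑ᶠ a, Γ.wal τ a) + Γ.lp.res τ := by
  open LendingProtocol in
  cases h with
  | dep hv hw hwal hres hcr hdb hp =>
    rename_i a0 v τ0
    rw [hwal, hres, finsum_upd2]
    by_cases hτ : τ = τ0 <;> simp [upd1, hτ] <;> ring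
  | bor hv hres0 hwal hres hcr hdb hp hH =>
    rename_i a0 v τ0
    rw [hwal, hres, finsum_upd2]
    by_cases hτ : τ = τ0 <;> simp [upd1, hτ] <;> ring
  | rep hv hw hd hwal hres hcr hdb hp =>
    rename_i a0 v τ0
    rw [hwal, hres, finsum_upd2]
    by_cases hτ : τ = τ0 <;> simp [upd1, hτ] <;> ring
  | rdm hw hcr0 hres0 hwal hres hcr hdb hp hH =>
    rename_i a0 w τ0
    rw [hwal, hres, finsum_upd2]
    by_cases hτ : τ = τ0 <;> simp [upd1, hτ] <;> ring
  | liq hab hv hwa hdbb hHb hcrb hHb' hwal hres hdb hcr hp =>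
    rename_i a0 b0 v τ0 τ1
    rw [hwal, hres, finsum_upd2]
    by_cases hτ : τ = τ0 <;> simp [upd1, hτ] <;> ring
  | int hwal hres hcr hdb hp =>
    rw [hwal, hres]
  | px hδ hpos hwal hlp hp =>
    rw [hwal, hlp]
  | swp hne hv hw hwal hlp hp =>
    rename_i a0 v τ0 τ1
    exact absurd rfl (hswp a0 v τ0 τ1)
end

section
/- In every reachable blockchain state Γ=(W,L,p) of the lending-protocol state machine and for every base token τ: if the credit supply S(τ)=0, then the reserves L(τ)=0 and the debt supply D(τ)=0. -/
open scoped BigOperators Classical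

namespace LendingProtocol

variable {User Token : Type}

lemma finsum_zero_iff' {α : Type} {f : α → ℝ} (hfin : (Function.support f).Finite)
    (hnn : ∀ a, 0 ≤ f a) : (∑ᶠ a, f a) = 0 ↔ ∀ a, f a = 0 := by
  constructor
  · intro h a
    have hsum : (∑ᶠ a, f a) = ∑ a ∈ hfin.toFinset, f a := finsum_eq_sum _ hfin
    by_cases ha : a ∈ hfin.toFinset
    · exact (Finset.sum_eq_zero_iff_of_nonneg (fun i _ => hnn i)).mp (hsum ▸ h) a ha
    · simpa using fun hc => ha (hfin.mem_toFinset.mpr hc)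
  · intro h; simp [h]

lemma slice_fin {f : Token → User → ℝ}
    (hf : (Function.support (Function.uncurry f)).Finite) (τ : Token) :
    (Function.support (f τ)).Finite := by
  have hsub : Function.support (f τ) ⊆
      (fun a => ((τ, a) : Token × User)) ⁻¹' Function.support (Function.uncurry f) :=
    fun a ha => ha
  exact (hf.preimage (fun a _ b _ h => congrArg Prod.snd h)).subset hsub

lemma cr_slice_fin (L : LPState User Token) (τ : Token) :
    (Function.support (L.cr τ)).Finite := slice_fin L.cr_fin τ

lemma db_slice_fin (L : LPState User Token) (τ : Token) :
    (Function.support (L.db τ)).Finite := slice_fin L.db_fin τ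

lemma creditSupply_eq_zero_iff (L : LPState User Token) (τ : Token) :
    creditSupply L τ = 0 ↔ ∀ a, L.cr τ a = 0 :=
  finsum_zero_iff' (cr_slice_fin L τ) (L.cr_nonneg τ)

lemma debtSupply_eq_zero_iff (L : LPState User Token) (τ : Token) :
    debtSupply L τ = 0 ↔ ∀ a, L.db τ a = 0 :=
  finsum_zero_iff' (db_slice_fin L τ) (L.db_nonneg τ)

lemma creditSupply_nonneg (L : LPState User Token) (τ : Token) : 0 ≤ creditSupply L τ :=
  finsum_nonneg (L.cr_nonneg τ)

lemma debtSupply_nonneg (L : LPState User Token) (τ : Token) : 0 ≤ debtSupply L τ :=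
  finsum_nonneg (L.db_nonneg τ)

lemma exch_nonneg (L : LPState User Token) (τ : Token) : 0 ≤ exch L τ := by
  unfold exch
  split
  · norm_num
  · exact div_nonneg (add_nonneg (L.res_nonneg τ) (debtSupply_nonneg L τ))
      (creditSupply_nonneg L τ)

/-- The key invariant: if all credits in τ are zero, then reserves and all
debts in τ are zero. -/
def Inv (Γ : Conf User Token) : Prop :=
  ∀ τ, (∀ a, Γ.lp.cr τ a = 0) → Γ.lp.res τ = 0 ∧ ∀ a, Γ.lp.db τ a = 0

lemma exch_eq_one_of_cr_zero {L : LPState User Token} {τ : Token}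
    (h : ∀ a, L.cr τ a = 0) : exch L τ = 1 := by
  unfold exch
  rw [if_pos ((creditSupply_eq_zero_iff L τ).mpr h)]

lemma step_inv {P : Params Token} {Γ Γ' : Conf User Token} {tx : Tx User Token}
    (hst : Step P Γ tx Γ') (hI : Inv Γ) : Inv Γ' := by
  cases hst with
  | @dep _Γ' a v τ hv hw hwal hres hcr hdb hp =>
    intro τ' hcr'
    rw [hcr] at hcr'
    by_cases hττ : τ' = τ
    · subst hττ
      exfalso
      have hca : ∀ a', a' ≠ a → Γ.lp.cr τ' a' = 0 := by
        intro a' hne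
        have := hcr' a'
        simpa [upd2, hne] using this
      have haa : Γ.lp.cr τ' a + v / exch Γ.lp τ' = 0 := by
        have := hcr' a
        simpa [upd2] using this
      have hdiv : 0 ≤ v / exch Γ.lp τ' := div_nonneg hv.le (exch_nonneg _ _)
      have h1 : Γ.lp.cr τ' a = 0 := by linarith [Γ.lp.cr_nonneg τ' a]
      have h2 : v / exch Γ.lp τ' = 0 := by linarith [Γ.lp.cr_nonneg τ' a]
      have hall : ∀ a', Γ.lp.cr τ' a' = 0 := by
        intro a'
        by_cases ha' : a' = a
        · rw [ha']; exact h1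
        · exact hca a' ha'
      rw [exch_eq_one_of_cr_zero hall, div_one] at h2
      exact absurd h2 (ne_of_gt hv)
    · have hc : ∀ a', Γ.lp.cr τ' a' = 0 := by
        intro a'
        have := hcr' a'
        simpa [upd2, hττ] using this
      obtain ⟨hr0, hd0⟩ := hI τ' hc
      refine ⟨?_, ?_⟩
      · rw [hres]; simpa [upd1, hττ] using hr0
      · rw [hdb]; exact hd0
  | @bor _Γ' a v τ hv hres0 hwal hres hcr hdb hp hH =>
    intro τ' hcr'
    rw [hcr] at hcr'
    obtain ⟨hr0, hd0⟩ := hI τ' hcr'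
    by_cases hττ : τ' = τ
    · exfalso; subst hττ; rw [hr0] at hres0; linarith
    · refine ⟨?_, ?_⟩
      · rw [hres]; simpa [upd1, hττ] using hr0
      · rw [hdb]; intro a'; simpa [upd2, hττ] using hd0 a'
  | @rep _Γ' a v τ hv hw hd hwal hres hcr hdb hp =>
    intro τ' hcr'
    rw [hcr] at hcr'
    obtain ⟨hr0, hd0⟩ := hI τ' hcr'
    by_cases hττ : τ' = τ
    · exfalso; subst hττ; rw [hd0 a] at hd; linarith
    · refine ⟨?_, ?_⟩
      · rw [hres]; simpa [upd1, hττ] using hr0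
      · rw [hdb]; intro a'; simpa [upd2, hττ] using hd0 a'
  | @rdm _Γ' a w τ hw hcr0 hres0 hwal hres hcr hdb hp hH =>
    intro τ' hcr'
    rw [hcr] at hcr'
    by_cases hττ : τ' = τ
    · subst hττ
      have hca : ∀ a', a' ≠ a → Γ.lp.cr τ' a' = 0 := by
        intro a' hne
        have := hcr' a'
        simpa [upd2, hne] using this
      have haa : Γ.lp.cr τ' a - w = 0 := by
        have := hcr' a
        simpa [upd2] using this
      have hcra : Γ.lp.cr τ' a = w := by linarith
      have hS : creditSupply Γ.lp τ' = w := by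
        rw [creditSupply, finsum_eq_single _ a hca, hcra]
      have hSne : creditSupply Γ.lp τ' ≠ 0 := by rw [hS]; exact ne_of_gt hw
      have hex : exch Γ.lp τ' =
          (Γ.lp.res τ' + debtSupply Γ.lp τ') / creditSupply Γ.lp τ' := by
        unfold exch; rw [if_neg hSne]
      have hwe : w * exch Γ.lp τ' = Γ.lp.res τ' + debtSupply Γ.lp τ' := by
        rw [hex, hS]
        field_simp
      have hD0 : debtSupply Γ.lp τ' = 0 := by
        rw [hwe] at hres0
        have := debtSupply_nonneg Γ.lp τ'
        linarith
      refine ⟨?_, ?_⟩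
      · rw [hres]
        have hz : Γ.lp.res τ' - w * exch Γ.lp τ' = 0 := by rw [hwe, hD0]; ring
        simpa [upd1] using hz
      · rw [hdb]
        exact (debtSupply_eq_zero_iff Γ.lp τ').mp hD0
    · have hc : ∀ a', Γ.lp.cr τ' a' = 0 := by
        intro a'
        have := hcr' a'
        simpa [upd2, hττ] using this
      obtain ⟨hr0, hd0⟩ := hI τ' hc
      refine ⟨?_, ?_⟩
      · rw [hres]; simpa [upd1, hττ] using hr0
      · rw [hdb]; exact hd0
  | @liq _Γ' a b v τ0 τ1 hab hv hwa hdbb hHb hcrb hHb' hwal hres hdb hcr hp =>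
    intro τ' hcr'
    rw [hcr] at hcr'
    set w1 := v / exch Γ.lp τ1 * (Γ.price τ0 / Γ.price τ1) * P.Rliq with hw1
    have hw1nn : 0 ≤ w1 := by
      apply mul_nonneg (mul_nonneg (div_nonneg hv.le (exch_nonneg _ _)) _)
        (le_of_lt (lt_trans one_pos P.one_lt_Rliq))
      exact div_nonneg (Γ.price_pos τ0).le (Γ.price_pos τ1).le
    by_cases h1 : τ' = τ1
    · subst h1
      exfalso
      have hba : b ≠ a := hab.symm
      have haa : Γ.lp.cr τ' a + w1 = 0 := by
        have := hcr' a
        simpa [upd2] using this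
      have hbb : Γ.lp.cr τ' b - w1 = 0 := by
        have := hcr' b
        simpa [upd2, hba] using this
      have hw10 : w1 = 0 := by linarith [Γ.lp.cr_nonneg τ' a]
      have hcall : ∀ x, Γ.lp.cr τ' x = 0 := by
        intro x
        by_cases hxa : x = a
        · subst hxa; linarith [Γ.lp.cr_nonneg τ' x]
        · by_cases hxb : x = b
          · subst hxb; linarith
          · have := hcr' x
            simpa [upd2, hxa, hxb] using this
      have hex1 : exch Γ.lp τ' = 1 := exch_eq_one_of_cr_zero hcall
      rw [hw1, hex1, div_one] at hw10
      have hp0 : 0 < Γ.price τ0 / Γ.price τ' :=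
        div_pos (Γ.price_pos τ0) (Γ.price_pos τ')
      have : 0 < v * (Γ.price τ0 / Γ.price τ') * P.Rliq :=
        mul_pos (mul_pos hv hp0) (lt_trans one_pos P.one_lt_Rliq)
      linarith
    · have hc : ∀ a', Γ.lp.cr τ' a' = 0 := by
        intro a'
        have := hcr' a'
        simpa [upd2, h1] using this
      obtain ⟨hr0, hd0⟩ := hI τ' hc
      by_cases h0 : τ' = τ0
      · exfalso; subst h0; rw [hd0 b] at hdbb; linarith
      · refine ⟨?_, ?_⟩
        · rw [hres]; simpa [upd1, h0] using hr0
        · rw [hdb]; intro a'; simpa [upd2, h0] using hd0 a'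
  | @int _Γ' hwal hres hcr hdb hp =>
    intro τ' hcr'
    rw [hcr] at hcr'
    obtain ⟨hr0, hd0⟩ := hI τ' hcr'
    refine ⟨?_, ?_⟩
    · rw [hres]; exact hr0
    · rw [hdb]; intro a'; simp [hd0 a']
  | @px _Γ' δ τ hδ hpos hwal hlp hp =>
    intro τ' hcr'
    rw [hlp] at hcr' ⊢
    exact hI τ' hcr'
  | @swp _Γ' a v τ0 τ1 hne hv hw hwal hlp hp =>
    intro τ' hcr'
    rw [hlp] at hcr' ⊢
    exact hI τ' hcr'

lemma run_inv {P : Params Token} {Γ Γ' : Conf User Token}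
    (hr : Run P Γ Γ') (hI : Inv Γ) : Inv Γ' := by
  induction hr with
  | refl => exact hI
  | tail _ hst ih => exact step_inv hst ih

end LendingProtocol

/-- in every reachable state, if the credit supply of τ is zero
then both the reserves and the debt supply of τ are zero. -/
theorem cred0_imp_res0_debt0 {User Token : Type}
    (P : LendingProtocol.Params Token)
    (Γ : LendingProtocol.Conf User Token)
    (h : LendingProtocol.Reachable P Γ) (τ : Token)
    (hS : LendingProtocol.creditSupply Γ.lp τ = 0) :
    Γ.lp.res τ = 0 ∧ LendingProtocol.debtSupply Γ.lp τ = 0 := by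
  obtain ⟨Γ0, hinit, hrun⟩ := h
  have hI0 : LendingProtocol.Inv Γ0 := fun τ' _ => ⟨hinit.1 τ', fun a => hinit.2.2 τ' a⟩
  have hI := LendingProtocol.run_inv hrun hI0
  have hc : ∀ a, Γ.lp.cr τ a = 0 :=
    (LendingProtocol.creditSupply_eq_zero_iff Γ.lp τ).mp hS
  obtain ⟨hr, hd⟩ := hI τ hc
  exact ⟨hr, (LendingProtocol.debtSupply_eq_zero_iff Γ.lp τ).mpr hd⟩
end

section
/- Gain from price updates: let Γ=(W,L,p) be a blockchain state in which the price update px(δ:τ) is enabled. Then for every user a, G_a(Γ, px(δ:τ)) = (W(τ,a) + Cr(τ,a)·X_L(τ) − Db(τ,a)) · δ. -/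
open scoped BigOperators Classical

open LendingProtocol in
/-- gain from a price update px(δ:τ). -/
theorem gain_from_price_update {User Token : Type}
    (P : Params Token)
    (Γ Γ' : Conf User Token) (δ : ℝ) (τ : Token)
    (h : Step P Γ (Tx.px δ τ) Γ') (a : User) :
    Wealth Γ' a - Wealth Γ a
      = (Γ.wal τ a + Γ.lp.cr τ a * exch Γ.lp τ - Γ.lp.db τ a) * δ := by
  cases h with
  | px hδ hpos hwal hlp hp => ?_
  have key : ∀ f : Token → ℝ, (Function.support f).Finite →
      (∑ᶠ t, f t * Γ'.price t) = (∑ᶠ t, f t * Γ.price t) + f τ * δ := by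
    intro f hf
    have h1 : ∀ t, f t * Γ'.price t
        = f t * Γ.price t + (if t = τ then f τ * δ else 0) := by
      intro t
      by_cases ht : t = τ
      · subst ht; simp [hp, upd1]; ring
      · simp [hp, upd1, ht]
    have hfin1 : (Function.support fun t => f t * Γ.price t).Finite :=
      hf.subset (by intro t ht; simp only [Function.mem_support] at *; intro h0; apply ht; rw [h0]; ring)
    have hfin2 : (Function.support fun t => if t = τ then f τ * δ else 0).Finite := by
      apply Set.Finite.subset (Set.finite_singleton τ)
      intro t ht
      simp only [Function.mem_support] at ht
      exact Set.mem_singleton_iff.mpr (by by_contra hne; simp [hne] at ht)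
    calc (∑ᶠ t, f t * Γ'.price t)
        = ∑ᶠ t, (f t * Γ.price t + (if t = τ then f τ * δ else 0)) := by
          exact finsum_congr h1
      _ = (∑ᶠ t, f t * Γ.price t) + ∑ᶠ t, (if t = τ then f τ * δ else 0) :=
          finsum_add_distrib hfin1 hfin2
      _ = (∑ᶠ t, f t * Γ.price t) + f τ * δ := by
          congr 1
          rw [finsum_eq_single _ τ (by intro x hx; simp [hx])]
          simp
  have hwfin : (Function.support fun t => Γ.wal t a).Finite := by
    apply Set.Finite.subset (Set.Finite.image Prod.fst Γ.wal_fin)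
    intro t ht
    exact ⟨(t, a), ht, rfl⟩
  have hcfin : (Function.support fun t => Γ.lp.cr t a * exch Γ.lp t).Finite := by
    apply Set.Finite.subset (Set.Finite.image Prod.fst Γ.lp.cr_fin)
    intro t ht
    refine ⟨(t, a), ?_, rfl⟩
    simp only [Function.mem_support] at ht ⊢
    intro h0
    apply ht
    show Γ.lp.cr t a * exch Γ.lp t = 0
    simp [Function.uncurry] at h0
    rw [h0]; ring
  have hdfin : (Function.support fun t => Γ.lp.db t a).Finite := by
    apply Set.Finite.subset (Set.Finite.image Prod.fst Γ.lp.db_fin)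
    intro t ht
    exact ⟨(t, a), ht, rfl⟩
  have e1 : (∑ᶠ t, Γ'.wal t a * Γ'.price t)
      = (∑ᶠ t, Γ.wal t a * Γ.price t) + Γ.wal τ a * δ := by
    rw [hwal]; exact key _ hwfin
  have e2 : Cval Γ' a = Cval Γ a + Γ.lp.cr τ a * exch Γ.lp τ * δ := by
    unfold Cval
    rw [hlp]
    exact key _ hcfin
  have e3 : Dval Γ' a = Dval Γ a + Γ.lp.db τ a * δ := by
    unfold Dval
    rw [hlp]
    exact key _ hdfin
  unfold Wealth
  rw [e1, e2, e3]
  ring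
end

section
/- Liquidation attack by price manipulation: let Γ=(W,L,p), let τ1≠τ2 be base tokens, and let a≠b be users such that: (i) Cr(τ1,b)=v_c>0 and Cr(τ,b)=0 for all τ≠τ1; (ii) Db(τ2,b)=v_d>0 and Db(τ,b)=0 for all τ≠τ2; (iii) W(τ2,a)>0; and (iv) H_Γ(b)≥1. Then there exists δ̄>0 such that for every δ with 0<δ<δ̄ and every v_l>0 satisfying v_l ≤ W(τ2,a), v_l ≤ v_d, and v_l < v_c·(X_L(τ1)/R_liq)·(δ/p(τ2)), the sequence λ = px((−p(τ1)+δ):τ1); a:liq(b, v_l:τ2, τ1); px((p(τ1)−δ):τ1) is enabled in Γ, and G_a(Γ,λ) > 0. -/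
open scoped BigOperators Classical

lemma support_ite_fin {α : Type} {g : α → ℝ} (hg : (Function.support g).Finite)
    (x : α) (y : ℝ) : (Function.support (fun z => if z = x then y else g z)).Finite := by
  apply (hg.union (Set.finite_singleton x)).subset
  intro z hz
  by_cases h : z = x
  · exact Or.inr h
  · left; simpa [Function.mem_support, h] using hz

lemma finsum_ite {α : Type} (g : α → ℝ) (hg : (Function.support g).Finite)
    (x : α) (y : ℝ) :
    ∑ᶠ z, (if z = x then y else g z) = (∑ᶠ z, g z) + (y - g x) := by
  classical
  set s : Finset α := insert x hg.toFinset with hs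
  have hsub : Function.support g ⊆ (s : Set α) := by
    intro z hz; simp [hs, Set.Finite.mem_toFinset, hz]
  have hsub2 : Function.support (fun z => if z = x then y else g z) ⊆ (s : Set α) := by
    intro z hz
    by_cases h : z = x
    · simp [hs, h]
    · have : g z ≠ 0 := by simpa [Function.mem_support, h] using hz
      simp [hs, Set.Finite.mem_toFinset, this, Function.mem_support]
  rw [finsum_eq_sum_of_support_subset _ hsub, finsum_eq_sum_of_support_subset _ hsub2]
  have hx : x ∈ s := Finset.mem_insert_self _ _
  rw [← Finset.add_sum_erase _ _ hx, ← Finset.add_sum_erase _ _ hx]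
  have : ∑ z ∈ s.erase x, (if z = x then y else g z) = ∑ z ∈ s.erase x, g z := by
    apply Finset.sum_congr rfl
    intro z hz
    simp [Finset.ne_of_mem_erase hz]
  rw [this]
  simp; ring

lemma fin_slice1 {α β : Type} {f : α → β → ℝ}
    (hf : (Function.support (Function.uncurry f)).Finite) (x : α) :
    (Function.support (f x)).Finite := by
  have hinj : Function.Injective (fun b : β => (x, b)) := by
    intro b1 b2 h; simpa using h
  apply (hf.preimage (hinj.injOn)).subset
  intro z hz; exact hz

lemma fin_slice2 {α β : Type} {f : α → β → ℝ}
    (hf : (Function.support (Function.uncurry f)).Finite) (z : β) :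
    (Function.support (fun x => f x z)).Finite := by
  have hinj : Function.Injective (fun a : α => (a, z)) := by
    intro b1 b2 h; simpa using h
  apply (hf.preimage (hinj.injOn)).subset
  intro x hx; exact hx

lemma upd1_fin {α : Type} {f : α → ℝ} (hf : (Function.support f).Finite)
    (x : α) (y : ℝ) :
    (Function.support (LendingProtocol.upd1 f x y)).Finite := by
  apply (hf.union (Set.finite_singleton x)).subset
  intro z hz
  by_cases h : z = x
  · exact Or.inr h
  · left; simpa [LendingProtocol.upd1, Function.mem_support, h] using hz

lemma upd2_fin {α β : Type} {f : α → β → ℝ}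
    (hf : (Function.support (Function.uncurry f)).Finite)
    (x : α) (z : β) (y : ℝ) :
    (Function.support (Function.uncurry (LendingProtocol.upd2 f x z y))).Finite := by
  apply (hf.union (Set.finite_singleton (x, z))).subset
  rintro ⟨x', z'⟩ hz
  by_cases h : x' = x ∧ z' = z
  · right; simp [h.1, h.2]
  · left
    simpa [LendingProtocol.upd2, Function.mem_support, Function.uncurry, h] using hz


lemma fin_mul_left {α : Type} {f : α → ℝ} (g : α → ℝ) (hf : (Function.support f).Finite) :
    (Function.support (fun x => f x * g x)).Finite := by
  apply hf.subset
  intro x hx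
  simp only [Function.mem_support] at hx ⊢
  intro h0; exact hx (by rw [h0, zero_mul])

lemma finsum_ite2 {α : Type} (g : α → ℝ) (hg : (Function.support g).Finite)
    (x1 x2 : α) (hne : x2 ≠ x1) (y1 y2 : ℝ) :
    ∑ᶠ z, (if z = x2 then y2 else if z = x1 then y1 else g z)
      = (∑ᶠ z, g z) + (y1 - g x1) + (y2 - g x2) := by
  rw [finsum_ite (fun z => if z = x1 then y1 else g z) (support_ite_fin hg x1 y1) x2 y2,
    finsum_ite g hg x1 y1]
  simp [hne]
  try ring

set_option maxHeartbeats 2000000 in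
open LendingProtocol in
/-- liquidation attack by price manipulation. -/
theorem liquidation_attack {User Token : Type}
    (P : Params Token)
    (Γ : Conf User Token) (a b : User) (τ1 τ2 : Token) (vc vd : ℝ)
    (hab : a ≠ b) (hττ : τ1 ≠ τ2)
    (hcrb : Γ.lp.cr τ1 b = vc) (hvc : 0 < vc)
    (hcr0 : ∀ τ, τ ≠ τ1 → Γ.lp.cr τ b = 0)
    (hdbb : Γ.lp.db τ2 b = vd) (hvd : 0 < vd)
    (hdb0 : ∀ τ, τ ≠ τ2 → Γ.lp.db τ b = 0)
    (hwa : 0 < Γ.wal τ2 a)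
    (hHb : (1 : EReal) ≤ Health P Γ b) :
    ∃ δmax : ℝ, 0 < δmax ∧ ∀ δ : ℝ, 0 < δ → δ < δmax →
      ∀ vl : ℝ, 0 < vl → vl ≤ Γ.wal τ2 a → vl ≤ vd →
        vl < vc * (exch Γ.lp τ1 / P.Rliq) * (δ / Γ.price τ2) →
        ∃ Γ1 Γ2 Γ3 : Conf User Token,
          Step P Γ (Tx.px (-(Γ.price τ1) + δ) τ1) Γ1 ∧
          Step P Γ1 (Tx.liq a b vl τ2 τ1) Γ2 ∧
          Step P Γ2 (Tx.px (Γ.price τ1 - δ) τ1) Γ3 ∧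
          0 < Wealth Γ3 a - Wealth Γ a := by
  classical
  have hp1 := Γ.price_pos τ1
  have hp2 := Γ.price_pos τ2
  obtain ⟨X, hXdef⟩ : ∃ x : ℝ, x = exch Γ.lp τ1 := ⟨_, rfl⟩
  obtain ⟨maxX, hmaxXdef⟩ : ∃ x : ℝ, x = max X 1 := ⟨_, rfl⟩
  have hmaxX0 : (0:ℝ) < maxX := hmaxXdef ▸ lt_of_lt_of_le one_pos (le_max_right _ _)
  have hXmax : X ≤ maxX := hmaxXdef ▸ le_max_left _ _
  have hRliq0 : (0:ℝ) < P.Rliq := lt_trans one_pos P.one_lt_Rliq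
  refine ⟨min (Γ.price τ1) (vd * Γ.price τ2 / (vc * maxX)), lt_min hp1 (by positivity), ?_⟩
  intro δ hδ0 hδmax vl hvl hvlwa hvlvd0 hvlo
  rw [← hXdef] at hvlo
  have hδp1 : δ < Γ.price τ1 := lt_of_lt_of_le hδmax (min_le_left _ _)
  have hδ2 : δ < vd * Γ.price τ2 / (vc * maxX) := lt_of_lt_of_le hδmax (min_le_right _ _)
  -- X > 0
  have hX0 : 0 < X := by
    by_contra h
    push_neg at h
    have h1 : X / P.Rliq ≤ 0 := div_nonpos_iff.mpr (Or.inr ⟨h, hRliq0.le⟩)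
    have h2 : vc * (X / P.Rliq) ≤ 0 := mul_nonpos_of_nonneg_of_nonpos hvc.le h1
    have h3 : vc * (X / P.Rliq) * (δ / Γ.price τ2) ≤ 0 :=
      mul_nonpos_of_nonpos_of_nonneg h2 (div_nonneg hδ0.le hp2.le)
    linarith
  have hCD : vc * X * δ < vd * Γ.price τ2 := by
    have h4 : δ * (vc * maxX) < vd * Γ.price τ2 := (lt_div_iff₀ (by positivity)).mp hδ2
    linarith only [h4, mul_nonneg (sub_nonneg.mpr hXmax) (mul_pos hvc hδ0).le]
  have key : vl * (P.Rliq * Γ.price τ2) < vc * (X * δ) := by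
    have e : vc * (X / P.Rliq) * (δ / Γ.price τ2) * (P.Rliq * Γ.price τ2) = vc * (X * δ) := by
      field_simp
    calc vl * (P.Rliq * Γ.price τ2)
        < vc * (X / P.Rliq) * (δ / Γ.price τ2) * (P.Rliq * Γ.price τ2) :=
          mul_lt_mul_of_pos_right hvlo (by positivity)
      _ = vc * (X * δ) := e
  obtain ⟨W1, hW1def⟩ : ∃ x : ℝ, x = vl / X * (Γ.price τ2 / δ) * P.Rliq := ⟨_, rfl⟩
  have hW1eq : W1 * (X * δ) = vl * (P.Rliq * Γ.price τ2) := by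
    rw [hW1def]; field_simp
  have hW1pos : 0 < W1 := by rw [hW1def]; positivity
  have hW1lt : W1 < vc := by
    have h := key
    rw [← hW1eq] at h
    exact lt_of_mul_lt_mul_right h (by positivity)
  have hvld : vl < vd := by
    nlinarith only [key, hCD, hp2, mul_pos (mul_pos hvl hp2) (sub_pos.mpr P.one_lt_Rliq)]
  -- Γ1
  have hprice1_pos : ∀ τ, 0 < upd1 Γ.price τ1 (Γ.price τ1 + (-(Γ.price τ1) + δ)) τ := by
    intro τ
    by_cases h : τ = τ1
    · simp [upd1, h]; linarith
    · simp [upd1, h]; exact Γ.price_pos τ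
  let Γ1 : Conf User Token :=
    { wal := Γ.wal, lp := Γ.lp,
      price := upd1 Γ.price τ1 (Γ.price τ1 + (-(Γ.price τ1) + δ)),
      wal_nonneg := Γ.wal_nonneg, wal_fin := Γ.wal_fin, price_pos := hprice1_pos }
  have hP1τ1 : Γ1.price τ1 = δ := by
    show upd1 Γ.price τ1 (Γ.price τ1 + (-(Γ.price τ1) + δ)) τ1 = δ
    simp [upd1]
  have hP1 : ∀ τ, τ ≠ τ1 → Γ1.price τ = Γ.price τ := by
    intro τ h
    show upd1 Γ.price τ1 (Γ.price τ1 + (-(Γ.price τ1) + δ)) τ = _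
    simp [upd1, h]
  have step1 : Step P Γ (Tx.px (-(Γ.price τ1) + δ) τ1) Γ1 :=
    Step.px (by intro h; linarith) (by linarith) rfl rfl rfl
  -- health of b in Γ1
  have hCval1b : Cval Γ1 b = vc * X * δ := by
    rw [Cval, finsum_eq_single _ τ1 (fun τ hτ => by
      show Γ.lp.cr τ b * exch Γ.lp τ * Γ1.price τ = 0
      rw [hcr0 τ hτ, zero_mul, zero_mul])]
    show Γ.lp.cr τ1 b * exch Γ.lp τ1 * Γ1.price τ1 = _
    rw [hP1τ1, hcrb, ← hXdef]
  have hDval1b : Dval Γ1 b = vd * Γ.price τ2 := by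
    rw [Dval, finsum_eq_single _ τ2 (fun τ hτ => by
      show Γ.lp.db τ b * Γ1.price τ = 0
      rw [hdb0 τ hτ, zero_mul])]
    show Γ.lp.db τ2 b * Γ1.price τ2 = _
    rw [hP1 τ2 (Ne.symm hττ), hdbb]
  have hD1pos : 0 < vd * Γ.price τ2 := by positivity
  have hH1b : Health P Γ1 b < 1 := by
    simp only [Health]
    rw [if_pos (by rw [hDval1b]; exact hD1pos), hCval1b, hDval1b]
    have hreal : P.Tliq * (vc * X * δ) / (vd * Γ.price τ2) < 1 := by
      rw [div_lt_one hD1pos]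
      linarith only [hCD, mul_pos (sub_pos.mpr P.Tliq_lt_one) (mul_pos (mul_pos hvc hX0) hδ0)]
    exact_mod_cast hreal
  -- Γ2
  obtain ⟨W1e, hW1edef⟩ : ∃ x : ℝ, x = (vl / exch Γ1.lp τ1) * (Γ1.price τ2 / Γ1.price τ1) * P.Rliq := ⟨_, rfl⟩
  have hW1eW1 : W1e = W1 := by
    rw [hW1edef, hP1τ1, hP1 τ2 (Ne.symm hττ), hW1def, hXdef]
    try rfl
  have hW1e_pos : 0 < W1e := by rw [hW1eW1]; exact hW1pos
  have hW1e_lt : W1e < vc := by rw [hW1eW1]; exact hW1lt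
  have hE1 : W1e * (X * δ) = vl * (P.Rliq * Γ.price τ2) := by rw [hW1eW1]; exact hW1eq
  have hcr2_nonneg : ∀ τ a', 0 ≤ upd2 (upd2 Γ.lp.cr τ1 b (Γ.lp.cr τ1 b - W1e)) τ1 a
      (Γ.lp.cr τ1 a + W1e) τ a' := by
    intro τ a'
    simp only [upd2]
    split_ifs with h1 h2
    · have h3 := Γ.lp.cr_nonneg τ1 a; linarith only [h3, hW1e_pos]
    · rw [hcrb]; linarith only [hW1e_lt]
    · exact Γ.lp.cr_nonneg _ _
  have hdb2_nonneg : ∀ τ a', 0 ≤ upd2 Γ.lp.db τ2 b (Γ.lp.db τ2 b - vl) τ a' := by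
    intro τ a'
    simp only [upd2]
    split_ifs with h1
    · rw [hdbb]; linarith only [hvlvd0]
    · exact Γ.lp.db_nonneg _ _
  have hwal2_nonneg : ∀ τ a', 0 ≤ upd2 Γ.wal τ2 a (Γ.wal τ2 a - vl) τ a' := by
    intro τ a'
    simp only [upd2]
    split_ifs with h1
    · linarith only [hvlwa]
    · exact Γ.wal_nonneg _ _
  have hres2_nonneg : ∀ τ, 0 ≤ upd1 Γ.lp.res τ2 (Γ.lp.res τ2 + vl) τ := by
    intro τ
    simp only [upd1]
    split_ifs with h1
    · have h3 := Γ.lp.res_nonneg τ2; linarith only [h3, hvl.le]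
    · exact Γ.lp.res_nonneg _
  let Γ2 : Conf User Token :=
    { wal := upd2 Γ.wal τ2 a (Γ.wal τ2 a - vl),
      lp := { res := upd1 Γ.lp.res τ2 (Γ.lp.res τ2 + vl),
              cr := upd2 (upd2 Γ.lp.cr τ1 b (Γ.lp.cr τ1 b - W1e)) τ1 a (Γ.lp.cr τ1 a + W1e),
              db := upd2 Γ.lp.db τ2 b (Γ.lp.db τ2 b - vl),
              res_nonneg := hres2_nonneg, cr_nonneg := hcr2_nonneg, db_nonneg := hdb2_nonneg,
              res_fin := upd1_fin Γ.lp.res_fin _ _,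
              cr_fin := upd2_fin (upd2_fin Γ.lp.cr_fin _ _ _) _ _ _,
              db_fin := upd2_fin Γ.lp.db_fin _ _ _ },
      price := Γ1.price,
      wal_nonneg := hwal2_nonneg, wal_fin := upd2_fin Γ.wal_fin _ _ _,
      price_pos := hprice1_pos }
  have hP2τ1 : Γ2.price τ1 = δ := hP1τ1
  -- slices
  have hcr2b : ∀ τ, Γ2.lp.cr τ b = if τ = τ1 then vc - W1e else Γ.lp.cr τ b := by
    intro τ
    show upd2 (upd2 Γ.lp.cr τ1 b (Γ.lp.cr τ1 b - W1e)) τ1 a (Γ.lp.cr τ1 a + W1e) τ b = _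
    simp [upd2, Ne.symm hab, hcrb]
  have hcr2a : ∀ τ, Γ2.lp.cr τ a = if τ = τ1 then Γ.lp.cr τ1 a + W1e else Γ.lp.cr τ a := by
    intro τ
    show upd2 (upd2 Γ.lp.cr τ1 b (Γ.lp.cr τ1 b - W1e)) τ1 a (Γ.lp.cr τ1 a + W1e) τ a = _
    by_cases h : τ = τ1
    · simp [upd2, h]
    · simp [upd2, h]
  have hdb2b : ∀ τ, Γ2.lp.db τ b = if τ = τ2 then vd - vl else Γ.lp.db τ b := by
    intro τ
    show upd2 Γ.lp.db τ2 b (Γ.lp.db τ2 b - vl) τ b = _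
    by_cases h : τ = τ2
    · simp [upd2, h, hdbb]
    · simp [upd2, h]
  have hdb2a : ∀ τ, Γ2.lp.db τ a = Γ.lp.db τ a := by
    intro τ
    show upd2 Γ.lp.db τ2 b (Γ.lp.db τ2 b - vl) τ a = _
    simp [upd2, hab]
  -- supplies and exchange rates
  have hS2 : ∀ τ, creditSupply Γ2.lp τ = creditSupply Γ.lp τ := by
    intro τ
    by_cases hτ : τ = τ1
    · subst hτ
      simp only [creditSupply]
      have hbody : ∀ a', Γ2.lp.cr τ a' =
          if a' = a then Γ.lp.cr τ a + W1e
          else if a' = b then Γ.lp.cr τ b - W1e else Γ.lp.cr τ a' := by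
        intro a'
        show upd2 (upd2 Γ.lp.cr τ b (Γ.lp.cr τ b - W1e)) τ a (Γ.lp.cr τ a + W1e) τ a' = _
        simp [upd2]
      rw [finsum_congr hbody,
        finsum_ite2 (fun a' => Γ.lp.cr τ a') (fin_slice1 Γ.lp.cr_fin τ) b a hab _ _]
      ring
    · apply finsum_congr
      intro a'
      show upd2 (upd2 Γ.lp.cr τ1 b (Γ.lp.cr τ1 b - W1e)) τ1 a (Γ.lp.cr τ1 a + W1e) τ a' = _
      simp [upd2, hτ]
  have hD2 : ∀ τ, debtSupply Γ2.lp τ =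
      if τ = τ2 then debtSupply Γ.lp τ2 - vl else debtSupply Γ.lp τ := by
    intro τ
    by_cases h : τ = τ2
    · subst h
      rw [if_pos rfl]
      simp only [debtSupply]
      have hbody : ∀ a', Γ2.lp.db τ a' =
          if a' = b then Γ.lp.db τ b - vl else Γ.lp.db τ a' := by
        intro a'
        show upd2 Γ.lp.db τ b (Γ.lp.db τ b - vl) τ a' = _
        simp [upd2]
      rw [finsum_congr hbody, finsum_ite (fun a' => Γ.lp.db τ a') (fin_slice1 Γ.lp.db_fin τ) b _]
      ring
    · rw [if_neg h]
      apply finsum_congr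
      intro a'
      show upd2 Γ.lp.db τ2 b (Γ.lp.db τ2 b - vl) τ a' = _
      simp [upd2, h]
  have hres2 : ∀ τ, Γ2.lp.res τ = if τ = τ2 then Γ.lp.res τ2 + vl else Γ.lp.res τ := by
    intro τ; rfl
  have hX2 : ∀ τ, exch Γ2.lp τ = exch Γ.lp τ := by
    intro τ
    simp only [exch]
    rw [hS2 τ]
    by_cases hS : creditSupply Γ.lp τ = 0
    · simp [hS]
    · rw [if_neg hS, if_neg hS]
      congr 1
      show Γ2.lp.res τ + debtSupply Γ2.lp τ = Γ.lp.res τ + debtSupply Γ.lp τ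
      rw [hres2 τ, hD2 τ]
      by_cases h : τ = τ2
      · subst h; simp only [eq_self_iff_true, if_true, ite_true]; ring
      · simp only [if_neg h]
  -- health of b in Γ2
  have hCval2b : Cval Γ2 b = (vc - W1e) * X * δ := by
    rw [Cval, finsum_eq_single _ τ1 (fun τ hτ => by
      rw [hcr2b τ, if_neg hτ, hcr0 τ hτ, zero_mul, zero_mul])]
    rw [hcr2b τ1, if_pos rfl, hX2 τ1, hP2τ1, ← hXdef]
  have hDval2b : Dval Γ2 b = (vd - vl) * Γ.price τ2 := by
    rw [Dval, finsum_eq_single _ τ2 (fun τ hτ => by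
      rw [hdb2b τ, if_neg hτ, hdb0 τ hτ, zero_mul])]
    rw [hdb2b τ2, if_pos rfl]
    have : Γ2.price τ2 = Γ.price τ2 := hP1 τ2 (Ne.symm hττ)
    rw [this]
  have hD2pos : 0 < (vd - vl) * Γ.price τ2 := mul_pos (sub_pos.mpr hvld) hp2
  have hH2b : Health P Γ2 b ≤ 1 := by
    simp only [Health]
    rw [if_pos (by rw [hDval2b]; exact hD2pos), hCval2b, hDval2b]
    have hreal : P.Tliq * ((vc - W1e) * X * δ) / ((vd - vl) * Γ.price τ2) ≤ 1 := by
      rw [div_le_one hD2pos]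
      have h2 : (vc - W1e) * X * δ = vc * (X * δ) - vl * (P.Rliq * Γ.price τ2) := by
        rw [← hE1]; ring
      rw [h2]
      linarith only [hCD, mul_pos (mul_pos hvl hp2) (sub_pos.mpr P.one_lt_Rliq),
        mul_nonneg (sub_nonneg.mpr P.Tliq_lt_one.le) (sub_nonneg.mpr key.le)]
    exact_mod_cast hreal
  have step2 : Step P Γ1 (Tx.liq a b vl τ2 τ1) Γ2 :=
    Step.liq hab hvl (show vl ≤ Γ1.wal τ2 a from hvlwa)
      (show vl ≤ Γ1.lp.db τ2 b from by show vl ≤ Γ.lp.db τ2 b; rw [hdbb]; exact hvlvd0)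
      hH1b
      (show (vl / exch Γ1.lp τ1) * (Γ1.price τ2 / Γ1.price τ1) * P.Rliq ≤ Γ1.lp.cr τ1 b from by
        rw [← hW1edef]
        show W1e ≤ Γ.lp.cr τ1 b
        rw [hcrb]; exact hW1e_lt.le)
      hH2b rfl rfl rfl (by rw [← hW1edef]) rfl
  -- Γ3
  have hprice3_pos : ∀ τ, 0 < upd1 Γ2.price τ1 (Γ2.price τ1 + (Γ.price τ1 - δ)) τ := by
    intro τ
    show 0 < if τ = τ1 then Γ2.price τ1 + (Γ.price τ1 - δ) else Γ2.price τ
    by_cases h : τ = τ1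
    · rw [if_pos h, hP2τ1]; linarith only [hp1]
    · rw [if_neg h]; exact Γ2.price_pos τ
  let Γ3 : Conf User Token :=
    { wal := Γ2.wal, lp := Γ2.lp,
      price := upd1 Γ2.price τ1 (Γ2.price τ1 + (Γ.price τ1 - δ)),
      wal_nonneg := Γ2.wal_nonneg, wal_fin := Γ2.wal_fin, price_pos := hprice3_pos }
  have step3 : Step P Γ2 (Tx.px (Γ.price τ1 - δ) τ1) Γ3 :=
    Step.px (by intro h; linarith only [h, hδp1]) (by rw [hP2τ1]; linarith only [hp1]) rfl rfl rfl
  have hP3 : Γ3.price = Γ.price := by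
    funext τ
    show (if τ = τ1 then Γ2.price τ1 + (Γ.price τ1 - δ) else Γ2.price τ) = Γ.price τ
    by_cases h : τ = τ1
    · rw [if_pos h, hP2τ1, h]; ring
    · rw [if_neg h]; exact hP1 τ h
  -- wealth computation
  have hwal3a : ∀ τ, Γ3.wal τ a = if τ = τ2 then Γ.wal τ2 a - vl else Γ.wal τ a := by
    intro τ
    show upd2 Γ.wal τ2 a (Γ.wal τ2 a - vl) τ a = _
    by_cases h : τ = τ2
    · simp [upd2, h]
    · simp [upd2, h]
  have hwalval : ∑ᶠ τ, Γ3.wal τ a * Γ3.price τ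
      = (∑ᶠ τ, Γ.wal τ a * Γ.price τ) - vl * Γ.price τ2 := by
    rw [hP3]
    have hbody : ∀ τ, Γ3.wal τ a * Γ.price τ =
        if τ = τ2 then (Γ.wal τ2 a - vl) * Γ.price τ2 else Γ.wal τ a * Γ.price τ := by
      intro τ
      rw [hwal3a τ]
      by_cases h : τ = τ2
      · subst h; simp
      · simp [h]
    rw [finsum_congr hbody,
      finsum_ite (fun τ => Γ.wal τ a * Γ.price τ)
        (fin_mul_left _ (fin_slice2 Γ.wal_fin a)) τ2 _]
    ring
  have hDval3a : Dval Γ3 a = Dval Γ a := finsum_congr (fun τ => by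
    show Γ2.lp.db τ a * Γ3.price τ = Γ.lp.db τ a * Γ.price τ
    rw [hdb2a τ, congrFun hP3 τ])
  have hCval3a : Cval Γ3 a = Cval Γ a + W1e * X * Γ.price τ1 := by
    simp only [Cval]
    have hbody : ∀ τ, Γ3.lp.cr τ a * exch Γ3.lp τ * Γ3.price τ =
        if τ = τ1 then (Γ.lp.cr τ1 a + W1e) * X * Γ.price τ1
        else Γ.lp.cr τ a * exch Γ.lp τ * Γ.price τ := by
      intro τ
      have e1 : exch Γ3.lp τ = exch Γ.lp τ := hX2 τ
      have e2 : Γ3.price τ = Γ.price τ := by rw [hP3]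
      have e3 : Γ3.lp.cr τ a = if τ = τ1 then Γ.lp.cr τ1 a + W1e else Γ.lp.cr τ a := hcr2a τ
      rw [e1, e2, e3]
      by_cases h : τ = τ1
      · subst h; rw [if_pos rfl, if_pos rfl, ← hXdef]
      · rw [if_neg h, if_neg h]
    rw [finsum_congr hbody,
      finsum_ite (fun τ => Γ.lp.cr τ a * exch Γ.lp τ * Γ.price τ)
        (fin_mul_left _ (fin_mul_left _ (fin_slice2 Γ.lp.cr_fin a))) τ1 _]
    rw [← hXdef]
    ring
  have hgain : Wealth Γ3 a - Wealth Γ a = W1e * X * Γ.price τ1 - vl * Γ.price τ2 := by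
    simp only [Wealth]
    rw [hwalval, hDval3a, hCval3a]
    ring
  have h5 : vl * Γ.price τ2 < W1e * X * Γ.price τ1 := by
    have hδne : δ ≠ 0 := ne_of_gt hδ0
    have e : W1e * X * Γ.price τ1 = vl * (P.Rliq * Γ.price τ2) * (Γ.price τ1 / δ) := by
      rw [← hE1]; field_simp
    rw [e]
    have h6 : 1 < Γ.price τ1 / δ := (one_lt_div hδ0).mpr hδp1
    nlinarith only [mul_pos (mul_pos hvl hp2) (sub_pos.mpr P.one_lt_Rliq),
      mul_pos (mul_pos hvl hp2) (sub_pos.mpr h6),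
      mul_pos (mul_pos (mul_pos hvl hp2) (sub_pos.mpr P.one_lt_Rliq)) (sub_pos.mpr h6)]
  exact ⟨Γ1, Γ2, Γ3, step1, step2, step3, by rw [hgain]; linarith only [h5]⟩
end
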